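/- Let c = (3/4)^{1/4} (the positive real fourth root) and consider the four complex numbers x₁ = (1−√3)/2 + c, x₂ = (1−√3)/2 − c, x₃ = (1+√3)/2 + i c, x₄ = (1+√3)/2 − i c. Then: (1) these four numbers are pairwise distinct and are exactly the roots of the polynomial x⁴ − 2x³ + 4x − 2, which is irreducible over ℚ; (2) they satisfy the algebraic system 1/x_i + 1/(x_i − 1) − Σ_{j≠i} 1/(x_i − x_j) = 0 for each 1 ≤ i ≤ 4. -/

import Mathlib

open Complex Polynomial

noncomputable section

/-- `c = (3/4)^{1/4}`, the positive real fourth root of `3/4`. -/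
def c4 : ℝ := (3 / 4 : ℝ) ^ ((1 : ℝ) / 4)

/-- The four complex numbers
`(1−√3)/2 ± (3/4)^{1/4}` and `(1+√3)/2 ± i(3/4)^{1/4}`. -/
def x4 : Fin 4 → ℂ
  | 0 => (((1 - Real.sqrt 3) / 2 + c4 : ℝ) : ℂ)
  | 1 => (((1 - Real.sqrt 3) / 2 - c4 : ℝ) : ℂ)
  | 2 => (((1 + Real.sqrt 3) / 2 : ℝ) : ℂ) + Complex.I * (c4 : ℂ)
  | 3 => (((1 + Real.sqrt 3) / 2 : ℝ) : ℂ) - Complex.I * (c4 : ℂ)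

lemma hs' : ((Real.sqrt 3 : ℝ) : ℂ) ^ 2 = 3 := by
  norm_cast
  rw [Real.sq_sqrt] <;> norm_num

lemma hc4sq : c4 ^ 2 = Real.sqrt 3 / 2 := by
  have h1 : c4 ^ 2 = (3/4 : ℝ) ^ ((1:ℝ)/2) := by
    rw [c4, ← Real.rpow_natCast (_ ^ _) 2, ← Real.rpow_mul (by norm_num)]
    norm_num
  rw [h1, ← Real.sqrt_eq_rpow, Real.sqrt_div (by norm_num : (0:ℝ) ≤ 3),
    show Real.sqrt 4 = 2 by rw [show (4:ℝ)=2^2 by norm_num, Real.sqrt_sq (by norm_num)]]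

lemma hc' : ((c4 : ℝ) : ℂ) ^ 2 = ((Real.sqrt 3 : ℝ) : ℂ) / 2 := by
  norm_cast
  exact_mod_cast congrArg (Complex.ofReal) hc4sq

lemma factor4 (z : ℂ) :
    (z - x4 0) * (z - x4 1) * ((z - x4 2) * (z - x4 3)) =
      z ^ 4 - 2 * z ^ 3 + 4 * z - 2 := by
  have hs : ((Real.sqrt 3 : ℝ) : ℂ) ^ 2 = 3 := hs'
  have hc : ((c4 : ℝ) : ℂ) ^ 2 = ((Real.sqrt 3 : ℝ) : ℂ) / 2 := hc'
  have hI : (Complex.I) ^ 2 = -1 := Complex.I_sq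
  set s : ℂ := ((Real.sqrt 3 : ℝ) : ℂ)
  set c : ℂ := ((c4 : ℝ) : ℂ)
  simp only [x4]
  push_cast
  linear_combination
    ((-3/16 : ℂ) + (1/2)*I^2 + (-1/4)*c^2 + (-1/4)*c^2*I^2 + (1/16)*s^2 + z + (-1/2)*z*I^2 + (-1/2)*z^2) * hs +
    ((-1 : ℂ) + (-1)*I^2 + c^2*I^2 + (-1/2)*s + s*I^2 + z + z*I^2 + z*s + (-1)*z*s*I^2 + (-1)*z^2 + (-1)*z^2*I^2) * hc +
    ((3/2 : ℂ) + (-1/2)*s + (-3/2)*z + (1/2)*z*s + (-1/2)*z^2*s) * hI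

lemma c4_pos : 0 < c4 := by unfold c4; positivity

lemma sqrt3_pos : 0 < Real.sqrt 3 := Real.sqrt_pos.2 (by norm_num)

lemma x4_inj : Function.Injective x4 := by
  have h1 := c4_pos
  have h2 := sqrt3_pos
  intro i j h
  fin_cases i <;> fin_cases j <;>
    simp only [x4, Complex.ext_iff, Complex.add_re, Complex.add_im,
      Complex.sub_re, Complex.sub_im, Complex.mul_re, Complex.mul_im,
      Complex.I_re, Complex.I_im, Complex.ofReal_re, Complex.ofReal_im] at h <;>
    first
      | rfl
      | linarith [h.1]
      | linarith [h.2]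

lemma roots_iff (z : ℂ) : z ^ 4 - 2 * z ^ 3 + 4 * z - 2 = 0 ↔ ∃ i : Fin 4, z = x4 i := by
  rw [← factor4]
  constructor
  · intro h
    rcases mul_eq_zero.1 h with h | h
    · rcases mul_eq_zero.1 h with h | h
      · exact ⟨0, by linear_combination h⟩
      · exact ⟨1, by linear_combination h⟩
    · rcases mul_eq_zero.1 h with h | h
      · exact ⟨2, by linear_combination h⟩
      · exact ⟨3, by linear_combination h⟩
  · rintro ⟨i, rfl⟩
    fin_cases i
    · show (x4 0 - x4 0) * (x4 0 - x4 1) * ((x4 0 - x4 2) * (x4 0 - x4 3)) = 0; ring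
    · show (x4 1 - x4 0) * (x4 1 - x4 1) * ((x4 1 - x4 2) * (x4 1 - x4 3)) = 0; ring
    · show (x4 2 - x4 0) * (x4 2 - x4 1) * ((x4 2 - x4 2) * (x4 2 - x4 3)) = 0; ring
    · show (x4 3 - x4 0) * (x4 3 - x4 1) * ((x4 3 - x4 2) * (x4 3 - x4 3)) = 0; ring
lemma gZ_monic : (X ^ 4 - 2 * X ^ 3 + 4 * X - 2 : ℤ[X]).Monic := by
  monicity!

lemma gZ_irr : Irreducible (X ^ 4 - 2 * X ^ 3 + 4 * X - 2 : ℤ[X]) := by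
  have hdeg : (X ^ 4 - 2 * X ^ 3 + 4 * X - 2 : ℤ[X]).degree = 4 := by compute_degree!
  apply irreducible_of_eisenstein_criterion (P := Ideal.span {2})
  · rw [Ideal.span_singleton_prime (by norm_num)]
    exact Int.prime_two
  · rw [gZ_monic.leadingCoeff, Ideal.mem_span_singleton]
    norm_num
  · intro n hn
    rw [hdeg] at hn
    have hn4 : n < 4 := by exact_mod_cast hn
    interval_cases n <;>
      simp [Ideal.mem_span_singleton, coeff_sub, coeff_add, coeff_X_pow, coeff_one, coeff_X] <;>
      norm_num
  · rw [hdeg]; norm_num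
  · rw [Ideal.span_singleton_pow, Ideal.mem_span_singleton]
    simp [coeff_sub, coeff_add, coeff_X_pow, coeff_one, coeff_X]
  · exact gZ_monic.isPrimitive

lemma gQ_irr : Irreducible (X ^ 4 - 2 * X ^ 3 + 4 * X - 2 : ℚ[X]) := by
  have h := (Polynomial.IsPrimitive.Int.irreducible_iff_irreducible_map_cast
    gZ_monic.isPrimitive).1 gZ_irr
  have hmap : ((X ^ 4 - 2 * X ^ 3 + 4 * X - 2 : ℤ[X]).map (Int.castRingHom ℚ)) =
      (X ^ 4 - 2 * X ^ 3 + 4 * X - 2 : ℚ[X]) := by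
    simp
  rwa [hmap] at h

lemma hroot (i : Fin 4) : x4 i ^ 4 - 2 * x4 i ^ 3 + 4 * x4 i - 2 = 0 :=
  (roots_iff _).2 ⟨i, rfl⟩

lemma hne0 (i : Fin 4) : x4 i ≠ 0 := fun h => by
  have := hroot i; rw [h] at this; norm_num at this

lemma hne1 (i : Fin 4) : x4 i - 1 ≠ 0 := sub_ne_zero.2 fun h => by
  have := hroot i; rw [h] at this; norm_num at this

lemma hdiff {i j : Fin 4} (h : i ≠ j) : x4 i - x4 j ≠ 0 :=
  sub_ne_zero.2 fun e => h (x4_inj e)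

lemma system_eq (i : Fin 4) :
    1 / x4 i + 1 / (x4 i - 1) - ∑ j ∈ Finset.univ.erase i, 1 / (x4 i - x4 j) = 0 := by
  rw [Finset.sum_erase (f := fun j => 1 / (x4 i - x4 j)) Finset.univ (by simp), Fin.sum_univ_four]
  have hs : ((Real.sqrt 3 : ℝ) : ℂ) ^ 2 = 3 := hs'
  have hc : ((c4 : ℝ) : ℂ) ^ 2 = ((Real.sqrt 3 : ℝ) : ℂ) / 2 := hc'
  have hI : (Complex.I) ^ 2 = -1 := Complex.I_sq
  set s : ℂ := ((Real.sqrt 3 : ℝ) : ℂ)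
  set c : ℂ := ((c4 : ℝ) : ℂ)
  fin_cases i
  · have d1 := hdiff (show (0:Fin 4) ≠ 1 by decide)
    have d2 := hdiff (show (0:Fin 4) ≠ 2 by decide)
    have d3 := hdiff (show (0:Fin 4) ≠ 3 by decide)
    have n0 := hne0 0
    have n1 := hne1 0
    show 1 / x4 0 + 1 / (x4 0 - 1) - (1 / (x4 0 - x4 0) + 1 / (x4 0 - x4 1) + 1 / (x4 0 - x4 2) + 1 / (x4 0 - x4 3)) = 0
    simp only [sub_self, div_zero, zero_add, add_zero]
    field_simp
    simp only [x4]
    push_cast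
    linear_combination ((-3/4 : ℂ) + (-3/4 : ℂ)*I^2 + (1/2 : ℂ)*c + (1/2 : ℂ)*c*I^2 + (-1/4 : ℂ)*c^2 + (1/4 : ℂ)*c^2*I^2 + (1/2 : ℂ)*s*c + (-1/4 : ℂ)*s^2) * hs +
      ((1/2 : ℂ) + (1/2 : ℂ)*I^2 + (-1/1 : ℂ)*c^2 + (-3/1 : ℂ)*c^2*I^2 + (-1/2 : ℂ)*s + (-3/2 : ℂ)*s*I^2 + (1/1 : ℂ)*s*c + (1/1 : ℂ)*s*c*I^2) * hc + ((-9/4 : ℂ) + (3/2 : ℂ)*c + (1/4 : ℂ)*s) * hI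
  · have d1 := hdiff (show (1:Fin 4) ≠ 2 by decide)
    have d2 := hdiff (show (1:Fin 4) ≠ 3 by decide)
    have d3 := hdiff (show (1:Fin 4) ≠ 0 by decide)
    have n0 := hne0 1
    have n1 := hne1 1
    show 1 / x4 1 + 1 / (x4 1 - 1) - (1 / (x4 1 - x4 0) + 1 / (x4 1 - x4 1) + 1 / (x4 1 - x4 2) + 1 / (x4 1 - x4 3)) = 0
    simp only [sub_self, div_zero, zero_add, add_zero]
    field_simp
    simp only [x4]
    push_cast
    linear_combination ((-3/4 : ℂ) + (-3/4 : ℂ)*I^2 + (-1/2 : ℂ)*c + (-1/2 : ℂ)*c*I^2 + (-1/4 : ℂ)*c^2 + (1/4 : ℂ)*c^2*I^2 + (-1/2 : ℂ)*s*c + (-1/4 : ℂ)*s^2) * hs +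
      ((1/2 : ℂ) + (1/2 : ℂ)*I^2 + (-1/1 : ℂ)*c^2 + (-3/1 : ℂ)*c^2*I^2 + (-1/2 : ℂ)*s + (-3/2 : ℂ)*s*I^2 + (-1/1 : ℂ)*s*c + (-1/1 : ℂ)*s*c*I^2) * hc + ((-9/4 : ℂ) + (-3/2 : ℂ)*c + (1/4 : ℂ)*s) * hI
  · have d1 := hdiff (show (2:Fin 4) ≠ 3 by decide)
    have d2 := hdiff (show (2:Fin 4) ≠ 0 by decide)
    have d3 := hdiff (show (2:Fin 4) ≠ 1 by decide)
    have n0 := hne0 2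
    have n1 := hne1 2
    show 1 / x4 2 + 1 / (x4 2 - 1) - (1 / (x4 2 - x4 0) + 1 / (x4 2 - x4 1) + 1 / (x4 2 - x4 2) + 1 / (x4 2 - x4 3)) = 0
    simp only [sub_self, div_zero, zero_add, add_zero]
    field_simp
    simp only [x4]
    push_cast
    linear_combination ((-1/2 : ℂ) + (-3/4 : ℂ)*I^2 + (-1/4 : ℂ)*I^4 + (-1/2 : ℂ)*c*I + (-1/2 : ℂ)*c*I^3 + (1/4 : ℂ)*c^2 + (-1/4 : ℂ)*c^2*I^2 + (-1/2 : ℂ)*s*c*I + (-1/4 : ℂ)*s^2) * hs +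
      ((1/2 : ℂ) + (1/2 : ℂ)*I^2 + (-3/1 : ℂ)*c^2*I^2 + (-1/1 : ℂ)*c^2*I^4 + (-3/2 : ℂ)*s*I^2 + (-1/2 : ℂ)*s*I^4 + (-1/1 : ℂ)*s*c*I + (-1/1 : ℂ)*s*c*I^3) * hc + ((-3/2 : ℂ) + (-3/4 : ℂ)*I^2 + (-3/2 : ℂ)*c*I + (1/4 : ℂ)*s) * hI
  · have d1 := hdiff (show (3:Fin 4) ≠ 0 by decide)
    have d2 := hdiff (show (3:Fin 4) ≠ 1 by decide)
    have d3 := hdiff (show (3:Fin 4) ≠ 2 by decide)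
    have n0 := hne0 3
    have n1 := hne1 3
    show 1 / x4 3 + 1 / (x4 3 - 1) - (1 / (x4 3 - x4 0) + 1 / (x4 3 - x4 1) + 1 / (x4 3 - x4 2) + 1 / (x4 3 - x4 3)) = 0
    simp only [sub_self, div_zero, zero_add, add_zero]
    field_simp
    simp only [x4]
    push_cast
    linear_combination ((-1/2 : ℂ) + (-3/4 : ℂ)*I^2 + (-1/4 : ℂ)*I^4 + (1/2 : ℂ)*c*I + (1/2 : ℂ)*c*I^3 + (1/4 : ℂ)*c^2 + (-1/4 : ℂ)*c^2*I^2 + (1/2 : ℂ)*s*c*I + (-1/4 : ℂ)*s^2) * hs +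
      ((1/2 : ℂ) + (1/2 : ℂ)*I^2 + (-3/1 : ℂ)*c^2*I^2 + (-1/1 : ℂ)*c^2*I^4 + (-3/2 : ℂ)*s*I^2 + (-1/2 : ℂ)*s*I^4 + (1/1 : ℂ)*s*c*I + (1/1 : ℂ)*s*c*I^3) * hc + ((-3/2 : ℂ) + (-3/4 : ℂ)*I^2 + (3/2 : ℂ)*c*I + (1/4 : ℂ)*s) * hI

/-- The four numbers `x₁,…,x₄` are pairwise distinct, are exactly the roots of
`x⁴ − 2x³ + 4x − 2` (which is irreducible over `ℚ`), and they solve the algebraic system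
`1/xᵢ + 1/(xᵢ−1) − Σ_{j≠i} 1/(xᵢ−xⱼ) = 0` for `1 ≤ i ≤ 4`. -/
theorem roots_of_quartic_solve_system :
    Function.Injective x4 ∧
    (∀ z : ℂ, z ^ 4 - 2 * z ^ 3 + 4 * z - 2 = 0 ↔ ∃ i : Fin 4, z = x4 i) ∧
    Irreducible (X ^ 4 - 2 * X ^ 3 + 4 * X - 2 : ℚ[X]) ∧
    (∀ i : Fin 4,
      1 / x4 i + 1 / (x4 i - 1) - ∑ j ∈ Finset.univ.erase i, 1 / (x4 i - x4 j) = 0) := by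
  exact ⟨x4_inj, roots_iff, gQ_irr, system_eq⟩
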